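/- arXiv:2108.01345 — 2 statements merged into one kernel-verified Lean document; each statement's English description precedes it below -/
import Mathlib

section
/- Assume (A1) with n₀ ≥ 1 and (A2). The vectors v₀, v_{n₀} ∈ ℂ^{2(n₀+1)} defined by v₀(n) = δ₀(n)·(d₀, −c₀)ᵀ and v_{n₀}(n) = δ_{n₀}(n)·(b_{n₀}, −a_{n₀})ᵀ satisfy 𝒦v₀ = 0 and 𝒦v_{n₀} = 0 and are linearly independent; in particular 0 is an eigenvalue of 𝒦 with geometric (hence algebraic) multiplicity at least 2. -/
open Complex Matrix

noncomputable section

/-- states: `ℂ²` -/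
abbrev C2 : Type := Fin 2 → ℂ

/-- `P n = |L⟩⟨L| U n` -/
def Pmat (U : ℤ → Matrix (Fin 2) (Fin 2) ℂ) (n : ℤ) : Matrix (Fin 2) (Fin 2) ℂ :=
  Matrix.of fun i j => if i = 0 then U n 0 j else 0

/-- `Q n = |R⟩⟨R| U n` -/
def Qmat (U : ℤ → Matrix (Fin 2) (Fin 2) ℂ) (n : ℤ) : Matrix (Fin 2) (Fin 2) ℂ :=
  Matrix.of fun i j => if i = 1 then U n 1 j else 0

/-- the time evolution operator `𝒰`: `(𝒰ψ)(n) = P_{n+1}ψ(n+1) + Q_{n-1}ψ(n-1)` -/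
def QWop (U : ℤ → Matrix (Fin 2) (Fin 2) ℂ) (ψ : ℤ → C2) : ℤ → C2 :=
  fun n => (Pmat U (n + 1)).mulVec (ψ (n + 1)) + (Qmat U (n - 1)).mulVec (ψ (n - 1))

/-- all local coins are unitary -/
def CoinsUnitary (U : ℤ → Matrix (Fin 2) (Fin 2) ℂ) : Prop :=
  ∀ n : ℤ, U n ∈ Matrix.unitaryGroup (Fin 2) ℂ

/-- Assumption (A1): `U n = I₂` outside `[n₀] = {0,…,n₀}` -/
def A1 (n0 : ℕ) (U : ℤ → Matrix (Fin 2) (Fin 2) ℂ) : Prop :=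
  ∀ n : ℤ, n < 0 ∨ (n0 : ℤ) < n → U n = 1

/-- Assumption (A2): `a n ≠ 0` for all `n` -/
def A2 (U : ℤ → Matrix (Fin 2) (Fin 2) ℂ) : Prop :=
  ∀ n : ℤ, U n 0 0 ≠ 0

/-- the restriction `𝒦` of `𝒰` to `ℓ²([n₀];ℂ²) ≅ ℂ^{2(n₀+1)}`, as a matrix:
`(𝒦v)(n) = P_{n+1}v(n+1) + Q_{n-1}v(n-1)` with the convention that out-of-range terms vanish. -/
def Kmat (n0 : ℕ) (U : ℤ → Matrix (Fin 2) (Fin 2) ℂ) :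
    Matrix (Fin (n0 + 1) × Fin 2) (Fin (n0 + 1) × Fin 2) ℂ :=
  Matrix.of fun p q =>
    (if p.2 = 0 ∧ (q.1 : ℕ) = (p.1 : ℕ) + 1 then U (((p.1 : ℕ) : ℤ) + 1) 0 q.2 else 0) +
    (if p.2 = 1 ∧ (q.1 : ℕ) + 1 = (p.1 : ℕ) then U ((q.1 : ℕ) : ℤ) 1 q.2 else 0)

/-- `μ` is an eigenvalue of `𝒦` -/
def HasEig (n0 : ℕ) (U : ℤ → Matrix (Fin 2) (Fin 2) ℂ) (μ : ℂ) : Prop :=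
  ∃ v : Fin (n0 + 1) × Fin 2 → ℂ, v ≠ 0 ∧ (Kmat n0 U).mulVec v = μ • v

/-- the algebraic multiplicity of `μ` as an eigenvalue of `𝒦`:
`dim ker (𝒦 - μI)^{2(n₀+1)}` -/
def algMult (n0 : ℕ) (U : ℤ → Matrix (Fin 2) (Fin 2) ℂ) (μ : ℂ) : ℕ :=
  Module.finrank ℂ
    (LinearMap.ker (Matrix.mulVecLin ((Kmat n0 U - μ • 1) ^ (2 * (n0 + 1)))))

/-- `ψ` solves the generalized eigenvalue equation `𝒰ψ = μψ` (pointwise on `ℤ`) -/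
def IsSol (U : ℤ → Matrix (Fin 2) (Fin 2) ℂ) (μ : ℂ) (ψ : ℤ → C2) : Prop :=
  ∀ n : ℤ, QWop U ψ n = μ • ψ n

/-- the local transfer matrix `T n ξ` -/
def Tmat (U : ℤ → Matrix (Fin 2) (Fin 2) ℂ) (ξ : ℂ) (n : ℤ) : Matrix (Fin 2) (Fin 2) ℂ :=
  !![Complex.exp (Complex.I * ξ) / (starRingEnd ℂ) (U n 0 0),
      -((starRingEnd ℂ) (U n 1 0)) / (starRingEnd ℂ) (U n 0 0);
    -(U n 1 0) / U n 1 1, Complex.exp (-(Complex.I * ξ)) / U n 1 1]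

/-- the global transfer matrix `𝕋(ξ) = T₀(ξ)T₁(ξ)⋯T_{n₀}(ξ)` -/
def TT (n0 : ℕ) (U : ℤ → Matrix (Fin 2) (Fin 2) ℂ) (ξ : ℂ) : Matrix (Fin 2) (Fin 2) ℂ :=
  ((List.range (n0 + 1)).map fun k => Tmat U ξ (k : ℤ)).prod

/-- the Wronskian-type determinant `𝒲_n(ψ₁,ψ₂) = det(Π_nψ₁, Π_nψ₂)` where
`Π_nψ = (⟨L|ψ(n)⟩, ⟨R|ψ(n+1)⟩)ᵀ` -/
def Wr (ψ₁ ψ₂ : ℤ → C2) (n : ℤ) : ℂ :=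
  ψ₁ n 0 * ψ₂ (n + 1) 1 - ψ₂ n 0 * ψ₁ (n + 1) 1

/-- outgoing state -/
def Outgoing (n0 : ℕ) (ψ : ℤ → C2) : Prop :=
  ∀ n : ℕ, ψ (-(n : ℤ)) 1 = 0 ∧ ψ ((n0 : ℤ) + n) 0 = 0

/-- member of `ℋ^out_N` -/
def OutgoingFrom (n0 : ℕ) (N : ℕ) (ψ : ℤ → C2) : Prop :=
  ∀ n : ℕ, N ≤ n → ψ (-(n : ℤ)) 1 = 0 ∧ ψ ((n0 : ℤ) + n) 0 = 0

/-- incoming state -/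
def Incoming (n0 : ℕ) (φ : ℤ → C2) : Prop :=
  ∀ n : ℕ, φ (-(n : ℤ)) 0 = 0 ∧ φ ((n0 : ℤ) + n) 1 = 0

/-- the pairing `⟨φ, ψ⟩ = Σ_{n∈ℤ} (φ(n), ψ(n))_{ℂ²}` -/
def pairing (φ ψ : ℤ → C2) : ℂ :=
  ∑' n : ℤ, ∑ i : Fin 2, (starRingEnd ℂ) (φ n i) * ψ n i

/-- restriction of a state to `[n₀]` -/
def resK (n0 : ℕ) (ψ : ℤ → C2) : Fin (n0 + 1) × Fin 2 → ℂ :=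
  fun p => ψ ((p.1 : ℕ) : ℤ) p.2

/-- the Jost solution `ψ_out^-(·;ξ)`: solution equal to `e^{-inξ}|L⟩` for `n ≤ -1` -/
def JostOutMinus (U : ℤ → Matrix (Fin 2) (Fin 2) ℂ) (ξ : ℂ) (ψ : ℤ → C2) : Prop :=
  IsSol U (Complex.exp (-(Complex.I * ξ))) ψ ∧
    ∀ n : ℤ, n ≤ -1 → ψ n = ![Complex.exp (-(Complex.I * (n : ℂ) * ξ)), 0]

/-- the Jost solution `ψ_out^+(·;ξ)`: solution equal to `e^{inξ}|R⟩` for `n ≥ n₀+1` -/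
def JostOutPlus (n0 : ℕ) (U : ℤ → Matrix (Fin 2) (Fin 2) ℂ) (ξ : ℂ) (ψ : ℤ → C2) : Prop :=
  IsSol U (Complex.exp (-(Complex.I * ξ))) ψ ∧
    ∀ n : ℤ, (n0 : ℤ) + 1 ≤ n → ψ n = ![0, Complex.exp (Complex.I * (n : ℂ) * ξ)]

/-- the Jost solution `ψ_in^-(·;ξ)`: solution equal to `e^{inξ}|R⟩` for `n ≤ -1` -/
def JostInMinus (U : ℤ → Matrix (Fin 2) (Fin 2) ℂ) (ξ : ℂ) (ψ : ℤ → C2) : Prop :=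
  IsSol U (Complex.exp (-(Complex.I * ξ))) ψ ∧
    ∀ n : ℤ, n ≤ -1 → ψ n = ![0, Complex.exp (Complex.I * (n : ℂ) * ξ)]

/-- the Jost solution `ψ_in^+(·;ξ)`: solution equal to `e^{-inξ}|L⟩` for `n ≥ n₀+1` -/
def JostInPlus (n0 : ℕ) (U : ℤ → Matrix (Fin 2) (Fin 2) ℂ) (ξ : ℂ) (ψ : ℤ → C2) : Prop :=
  IsSol U (Complex.exp (-(Complex.I * ξ))) ψ ∧
    ∀ n : ℤ, (n0 : ℤ) + 1 ≤ n → ψ n = ![Complex.exp (-(Complex.I * (n : ℂ) * ξ)), 0]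

private theorem stmt10_aux_d_ne (A : Matrix (Fin 2) (Fin 2) ℂ)
    (h : A ∈ Matrix.unitaryGroup (Fin 2) ℂ) (ha : A 0 0 ≠ 0) : A 1 1 ≠ 0 := by
  have h1 : A * star A = 1 := Matrix.mem_unitaryGroup_iff.mp h
  have h2 : star A * A = 1 := Matrix.mem_unitaryGroup_iff'.mp h
  have e1 := congrArg (fun M => M 1 1) h1
  have e2 := congrArg (fun M => M 0 0) h2
  simp [Matrix.mul_apply, Matrix.star_apply, Fin.sum_univ_two, Matrix.one_apply] at e1 e2
  intro hd
  rw [hd] at e1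
  simp at e1
  apply ha
  have hz : A 0 0 * (starRingEnd ℂ) (A 0 0) = 0 := by linear_combination e2 - e1
  rw [Complex.mul_conj] at hz
  exact_mod_cast Complex.normSq_eq_zero.mp (by exact_mod_cast hz)

/-- two explicit independent null vectors of `𝒦`; `0` is an
eigenvalue of multiplicity at least two. -/
theorem stmt_10 (n0 : ℕ) (hn0 : 1 ≤ n0) (U : ℤ → Matrix (Fin 2) (Fin 2) ℂ)
    (hU : CoinsUnitary U) (hA1 : A1 n0 U) (hA2 : A2 U)
    (v0 vn : Fin (n0 + 1) × Fin 2 → ℂ)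
    (hv0 : v0 = fun p => if p.1 = 0 then ![U 0 1 1, -(U 0 1 0)] p.2 else 0)
    (hvn : vn = fun p =>
      if p.1 = Fin.last n0 then ![U (n0 : ℤ) 0 1, -(U (n0 : ℤ) 0 0)] p.2 else 0) :
    (Kmat n0 U).mulVec v0 = 0 ∧ (Kmat n0 U).mulVec vn = 0 ∧
    LinearIndependent ℂ ![v0, vn] ∧
    2 ≤ Module.finrank ℂ (LinearMap.ker (Matrix.mulVecLin (Kmat n0 U))) := by
  have hd0 : U 0 1 1 ≠ 0 := stmt10_aux_d_ne (U 0) (hU 0) (hA2 0)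
  have han : U (n0 : ℤ) 0 0 ≠ 0 := hA2 n0
  have hlast0 : (0 : Fin (n0 + 1)) ≠ Fin.last n0 := by
    intro h
    have := congrArg Fin.val h
    simp [Fin.val_last] at this
    omega
  have h1 : (Kmat n0 U).mulVec v0 = 0 := by
    funext p
    obtain ⟨m, j⟩ := p
    rw [hv0]
    simp only [Matrix.mulVec, dotProduct, Fintype.sum_prod_type, Kmat, Matrix.of_apply,
      mul_ite, mul_zero, Fin.sum_univ_two, ite_add_ite, add_zero, zero_add,
      Matrix.cons_val_zero, Matrix.cons_val_one, Matrix.head_cons,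
      Fintype.sum_ite_eq', Fin.val_zero, Pi.zero_apply]
    have hfalse : ¬((0:ℕ) = (m:ℕ)+1) := by omega
    simp only [hfalse, and_false, false_and, if_false, zero_add, zero_mul, add_zero]
    by_cases hc : j = (1:Fin 2) ∧ (0:ℕ)+1 = (m:ℕ)
    · have hm : (1:ℕ) = (m:ℕ) := by omega
      simp only [hc.1, hm, if_true, true_and, if_pos rfl, Nat.cast_zero]
      ring
    · simp [hc]
  have h2 : (Kmat n0 U).mulVec vn = 0 := by
    funext p
    obtain ⟨m, j⟩ := p
    rw [hvn]
    simp only [Matrix.mulVec, dotProduct, Fintype.sum_prod_type, Kmat, Matrix.of_apply,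
      mul_ite, mul_zero, Fin.sum_univ_two, ite_add_ite, add_zero, zero_add,
      Matrix.cons_val_zero, Matrix.cons_val_one, Matrix.head_cons,
      Fintype.sum_ite_eq', Fin.val_last, Pi.zero_apply]
    have hfalse : ¬((n0:ℕ)+1 = (m:ℕ)) := by omega
    simp only [hfalse, and_false, if_false, zero_add, zero_mul, add_zero]
    by_cases hc : j = (0:Fin 2) ∧ (n0:ℕ) = (m:ℕ)+1
    · have hm : (n0:ℕ) = (m:ℕ)+1 := hc.2
      simp only [hc.1, hm, if_true, true_and, if_pos rfl, Nat.cast_add, Nat.cast_one]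
      have h2 : ((m:ℕ):ℤ) + 1 = (n0:ℤ) := by omega
      rw [h2]; ring
    · simp [hc]
  have hli : LinearIndependent ℂ ![v0, vn] := by
    rw [LinearIndependent.pair_iff]
    intro s t hst
    have e0 := congrFun hst ((0 : Fin (n0 + 1)), (0 : Fin 2))
    have en := congrFun hst ((Fin.last n0), (1 : Fin 2))
    simp only [hv0, hvn, Pi.add_apply, Pi.smul_apply, smul_eq_mul, Pi.zero_apply,
      if_pos rfl, if_neg hlast0, if_neg (Ne.symm hlast0),
      Matrix.cons_val_zero, Matrix.cons_val_one, Matrix.head_cons, mul_zero] at e0 en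
    simp only [if_true, add_zero, zero_add] at e0 en
    constructor
    · exact (mul_eq_zero.mp e0).resolve_right hd0
    · rcases mul_eq_zero.mp en with h | h
      · exact h
      · exact absurd (neg_eq_zero.mp h) han
  refine ⟨h1, h2, hli, ?_⟩
  have hm0 : v0 ∈ LinearMap.ker (Matrix.mulVecLin (Kmat n0 U)) := by
    rw [LinearMap.mem_ker, Matrix.mulVecLin_apply]; exact h1
  have hmn : vn ∈ LinearMap.ker (Matrix.mulVecLin (Kmat n0 U)) := by
    rw [LinearMap.mem_ker, Matrix.mulVecLin_apply]; exact h2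
  set S := LinearMap.ker (Matrix.mulVecLin (Kmat n0 U))
  let w : Fin 2 → S := ![⟨v0, hm0⟩, ⟨vn, hmn⟩]
  have hcomp : (S.subtype : S →ₗ[ℂ] _) ∘ w = ![v0, vn] := by
    funext i; fin_cases i <;> rfl
  have hw : LinearIndependent ℂ w :=
    LinearIndependent.of_comp S.subtype (by rw [hcomp]; exact hli)
  simpa using hw.fintype_card_le_finrank
end
end

section
/- Assume (A1) and (A2). A nonzero complex number λ is an eigenvalue of 𝒦 if and only if −λ is an eigenvalue of 𝒦, and in that case their algebraic multiplicities coincide. Moreover, the sum of the algebraic multiplicities of all nonzero eigenvalues of 𝒦 is at most 2n₀. (Equivalently: there are at most 2n₀ resonances counted with multiplicity, and ξ is a resonance if and only if ξ + π is.) -/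
open Complex Matrix

noncomputable section

/-! The chessboard sign `D = diag((-1)^n)` is an involution with `D 𝒦 D = -𝒦`, because `𝒦` only
couples neighbouring sites. Hence `D (𝒦 - μ)^k D = ±(𝒦 + μ)^k`, so `𝒦 - μ` and `𝒦 + μ` have powers of
equal rank: this gives both the symmetry of the eigenvalues and that of the algebraic multiplicities.
For the bound, the generalized eigenspaces of `𝒦` are independent in a space of dimension `2(n₀+1)`,
and the one for `0` has dimension at least `2`: the rows `(n₀, L)` and `(0, R)` of `𝒦` vanish, so
`rank 𝒦^k ≤ rank 𝒦 ≤ 2n₀`. -/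

open Module

theorem iSupIndep.sum_finrank_le {ι K V : Type*} [DivisionRing K] [AddCommGroup V] [Module K V]
    [FiniteDimensional K V] {p : ι → Submodule K V} (hp : iSupIndep p) (s : Finset ι) :
    ∑ i ∈ s, finrank K (p i) ≤ finrank K V := by
  classical
  suffices ∑ i ∈ s, finrank K (p i) = finrank K ↥(s.sup p) from this ▸ Submodule.finrank_le _
  induction s using Finset.cons_induction with
  | empty => rw [Finset.sum_empty, Finset.sup_empty, finrank_bot]
  | cons a s ha ih =>
    have hdisj : Disjoint (p a) (s.sup p) :=
      hp.supIndep' (s.cons a ha) (s.subset_cons ha) (s.mem_cons_self a) ha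
    have := Submodule.finrank_sup_add_finrank_inf_eq (p a) (s.sup p)
    rw [hdisj.eq_bot, finrank_bot, add_zero] at this
    rw [Finset.sum_cons, Finset.sup_cons, ih, this]

namespace Matrix

variable {n K : Type*} [Fintype n] [Field K]

theorem finrank_ker_mulVecLin (A : Matrix n n K) :
    finrank K (LinearMap.ker A.mulVecLin) = Fintype.card n - A.rank := by
  have := LinearMap.finrank_range_add_finrank_ker A.mulVecLin
  rw [finrank_fintype_fun_eq_card] at this
  rw [rank]
  omega

variable [DecidableEq n]

theorem exists_mulVec_eq_smul_iff_rank_lt (A : Matrix n n K) (μ : K) :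
    (∃ v : n → K, v ≠ 0 ∧ A *ᵥ v = μ • v) ↔ (A - μ • 1).rank < Fintype.card n := by
  have hker : ∀ v, v ∈ LinearMap.ker (A - μ • 1).mulVecLin ↔ A *ᵥ v = μ • v := fun v => by
    rw [LinearMap.mem_ker, mulVecLin_apply, sub_mulVec, smul_mulVec, one_mulVec, sub_eq_zero]
  have hrank := (A - μ • 1).rank_le_card_height
  rw [← Nat.sub_pos_iff_lt, ← finrank_ker_mulVecLin, Nat.pos_iff_ne_zero, Ne,
    Submodule.finrank_eq_zero, ← Ne, Submodule.ne_bot_iff]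
  simp only [hker]
  exact exists_congr fun v => and_comm

theorem toLin'_pow_sub_smul (A : Matrix n n K) (μ : K) (k : ℕ) :
    toLin' ((A - μ • 1) ^ k) = (toLin' A - μ • 1) ^ k := by
  change toLinAlgEquiv' _ = _
  rw [map_pow, map_sub, map_smul, map_one]
  rfl

theorem rank_neg_pow (A : Matrix n n K) (k : ℕ) : ((-A) ^ k).rank = (A ^ k).rank := by
  rw [neg_pow, rank_mul_eq_right_of_isUnit_det _ _
    ((isUnit_iff_isUnit_det _).mp ((isUnit_neg_one (α := Matrix n n K)).pow k))]

theorem rank_pow_sub_smul_neg_of_conj_eq_neg {A D : Matrix n n K} (hD : D * D = 1)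
    (hDA : D * A * D = -A) (μ : K) (k : ℕ) :
    ((A - (-μ) • 1) ^ k).rank = ((A - μ • 1) ^ k).rank := by
  let u : (Matrix n n K)ˣ := ⟨D, D, hD, hD⟩
  have hconj : (u : Matrix n n K) * (A - μ • 1) * ((u⁻¹ : (Matrix n n K)ˣ) : Matrix n n K) =
      -(A - (-μ) • 1) := by
    change D * (A - μ • 1) * D = _
    rw [mul_sub, sub_mul, hDA, mul_smul_comm, mul_one, smul_mul_assoc, hD, neg_smul,
      sub_neg_eq_add, neg_add']
  have hdet : IsUnit D.det := isUnit_det_of_left_inverse hD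
  rw [← rank_neg_pow, ← hconj, Units.conj_pow]
  change (D * _ * D).rank = _
  rw [rank_mul_eq_left_of_isUnit_det _ _ hdet, rank_mul_eq_right_of_isUnit_det _ _ hdet]

theorem rank_pow_le_rank (A : Matrix n n K) {k : ℕ} (hk : k ≠ 0) : (A ^ k).rank ≤ A.rank := by
  obtain ⟨j, rfl⟩ := Nat.exists_eq_succ_of_ne_zero hk
  rw [pow_succ']
  exact rank_mul_le_left _ _

end Matrix

def chessboard (n0 : ℕ) : Matrix (Fin (n0 + 1) × Fin 2) (Fin (n0 + 1) × Fin 2) ℂ :=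
  diagonal fun p => (-1) ^ (p.1 : ℕ)

section Kmat

variable {n0 : ℕ} {U : ℤ → Matrix (Fin 2) (Fin 2) ℂ}

theorem chessboard_mul_self : chessboard n0 * chessboard n0 = 1 := by
  rw [chessboard, diagonal_mul_diagonal, ← diagonal_one]
  congr 1
  funext p
  rw [← pow_add, ← two_mul, pow_mul, neg_one_sq, one_pow]

theorem chessboard_mul_Kmat_mul_chessboard :
    chessboard n0 * Kmat n0 U * chessboard n0 = -Kmat n0 U := by
  ext p q
  have hsq : ∀ k : ℕ, (-1 : ℂ) ^ k * (-1) ^ k = 1 := fun k => by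
    rw [← mul_pow, neg_one_mul, neg_neg, one_pow]
  rw [neg_apply]
  simp only [chessboard, diagonal_mul, mul_diagonal, Kmat, of_apply]
  split_ifs with hL hR hR
  · omega
  · rw [hL.2, pow_succ]
    linear_combination (-U (((p.1 : ℕ) : ℤ) + 1) 0 q.2) * hsq p.1
  · rw [← hR.2, pow_succ]
    linear_combination (-U ((q.1 : ℕ) : ℤ) 1 q.2) * hsq q.1
  · ring

theorem card_fin_succ_prod_fin_two : Fintype.card (Fin (n0 + 1) × Fin 2) = 2 * (n0 + 1) := by
  rw [Fintype.card_prod, Fintype.card_fin, Fintype.card_fin, mul_comm]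

theorem Kmat_row_last_zero : (Kmat n0 U).row (Fin.last n0, 0) = 0 := by
  funext q
  have hq := q.1.isLt
  simp only [row, Kmat, of_apply, Fin.val_last, Pi.zero_apply]
  rw [if_neg (by omega), if_neg (by simp)]
  ring

theorem Kmat_row_zero_one : (Kmat n0 U).row (0, 1) = 0 := by
  funext q
  simp only [row, Kmat, of_apply, Pi.zero_apply]
  rw [if_neg (by simp), if_neg (by simp)]
  ring

theorem rank_Kmat_le : (Kmat n0 U).rank ≤ 2 * n0 := by
  classical
  let s : Finset (Fin (n0 + 1) × Fin 2) := {(Fin.last n0, 0), (0, 1)}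
  have hs : s.card = 2 := Finset.card_pair (by simp [Prod.ext_iff])
  calc (Kmat n0 U).rank ≤ (Finset.univ \ s).card := by
        refine rank_le_card_of_support_subset _ _ fun p hp => ?_
        refine Finset.mem_coe.2 (Finset.mem_sdiff.2 ⟨Finset.mem_univ p, ?_⟩)
        simp only [s, Finset.mem_insert, Finset.mem_singleton]
        rintro (rfl | rfl)
        exacts [hp Kmat_row_last_zero, hp Kmat_row_zero_one]
    _ = 2 * n0 := by
        rw [Finset.card_univ_sdiff, card_fin_succ_prod_fin_two, hs]
        omega

theorem algMult_eq_card_sub_rank (μ : ℂ) :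
    algMult n0 U μ = 2 * (n0 + 1) - ((Kmat n0 U - μ • 1) ^ (2 * (n0 + 1))).rank := by
  rw [algMult, finrank_ker_mulVecLin, card_fin_succ_prod_fin_two]

theorem algMult_eq_finrank_genEigenspace (μ : ℂ) :
    algMult n0 U μ =
      finrank ℂ (Module.End.genEigenspace (toLin' (Kmat n0 U)) μ (2 * (n0 + 1) : ℕ)) := by
  rw [Module.End.genEigenspace_nat, algMult, ← toLin'_apply', toLin'_pow_sub_smul]

theorem algMult_neg (μ : ℂ) : algMult n0 U (-μ) = algMult n0 U μ := by
  rw [algMult_eq_card_sub_rank, algMult_eq_card_sub_rank,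
    rank_pow_sub_smul_neg_of_conj_eq_neg chessboard_mul_self chessboard_mul_Kmat_mul_chessboard]

theorem hasEig_neg_iff (μ : ℂ) : HasEig n0 U (-μ) ↔ HasEig n0 U μ := by
  rw [HasEig, HasEig, exists_mulVec_eq_smul_iff_rank_lt, exists_mulVec_eq_smul_iff_rank_lt,
    ← pow_one (Kmat n0 U - (-μ) • 1), ← pow_one (Kmat n0 U - μ • 1),
    rank_pow_sub_smul_neg_of_conj_eq_neg chessboard_mul_self chessboard_mul_Kmat_mul_chessboard]

theorem two_le_algMult_zero : 2 ≤ algMult n0 U 0 := by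
  have hpow := (Kmat n0 U).rank_pow_le_rank (k := 2 * (n0 + 1)) (by omega)
  have hK := rank_Kmat_le (n0 := n0) (U := U)
  rw [algMult_eq_card_sub_rank, zero_smul, sub_zero]
  omega

theorem sum_algMult_le {S : Finset ℂ} (hS : 0 ∉ S) :
    ∑ μ ∈ S, algMult n0 U μ ≤ 2 * n0 := by
  have hsum := (Module.End.independent_genEigenspace (toLin' (Kmat n0 U))
    (2 * (n0 + 1) : ℕ)).sum_finrank_le (insert 0 S)
  simp only [← algMult_eq_finrank_genEigenspace, Finset.sum_insert hS,
    finrank_fintype_fun_eq_card, card_fin_succ_prod_fin_two] at hsum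
  have h0 := two_le_algMult_zero (n0 := n0) (U := U)
  omega

end Kmat

theorem stmt_11_general (n0 : ℕ) (U : ℤ → Matrix (Fin 2) (Fin 2) ℂ) :
    (∀ μ : ℂ, μ ≠ 0 → (HasEig n0 U μ ↔ HasEig n0 U (-μ))) ∧
    (∀ μ : ℂ, μ ≠ 0 → HasEig n0 U μ → algMult n0 U μ = algMult n0 U (-μ)) ∧
    ∀ S : Finset ℂ, (∀ μ ∈ S, μ ≠ 0 ∧ HasEig n0 U μ) →
      ∑ μ ∈ S, algMult n0 U μ ≤ 2 * n0 :=
  ⟨fun μ _ => (hasEig_neg_iff μ).symm, fun μ _ _ => (algMult_neg μ).symm,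
    fun _ hS => sum_algMult_le fun h0 => (hS 0 h0).1 rfl⟩

/-- symmetry `λ ↔ -λ` of the nonzero spectrum of `𝒦` (with equal
algebraic multiplicities), and the total multiplicity is at most `2n₀`. -/
theorem stmt_11 (n0 : ℕ) (U : ℤ → Matrix (Fin 2) (Fin 2) ℂ)
    (hU : CoinsUnitary U) (hA1 : A1 n0 U) (hA2 : A2 U) :
    (∀ μ : ℂ, μ ≠ 0 → (HasEig n0 U μ ↔ HasEig n0 U (-μ))) ∧
    (∀ μ : ℂ, μ ≠ 0 → HasEig n0 U μ → algMult n0 U μ = algMult n0 U (-μ)) ∧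
    ∀ S : Finset ℂ, (∀ μ ∈ S, μ ≠ 0 ∧ HasEig n0 U μ) →
      ∑ μ ∈ S, algMult n0 U μ ≤ 2 * n0 :=
  stmt_11_general n0 U
end
end
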